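/- Let p be a prime, A a commutative ring with pA = 0, and f : F → G a homomorphism of formal group laws over A whose linear coefficient f′(0) is 0. Then there is a unique power series g ∈ A⟦x⟧ with f(x) = g(x^p), and this g is a homomorphism of formal group laws g : F^{(p)} → G. (Homomorphisms with vanishing derivative factor uniquely through the relative Frobenius.) -/

import Mathlib

noncomputable section

namespace FGL

open Finset

variable {A B : Type*} [CommRing A] [CommRing B] {τ : Type*}

/-- The total degree of a monomial exponent. -/
def deg {σ : Type*} (d : σ →₀ ℕ) : ℕ := d.sum fun _ n => n

/-- The exponent `(i, j)` as an element of `Fin 2 →₀ ℕ`. -/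
def mon2 (i j : ℕ) : Fin 2 →₀ ℕ := Finsupp.single 0 i + Finsupp.single 1 j

/-- Substitution `F(g, h)` of two power series (each assumed to have zero constant
term) into a two-variable power series `F`. -/
def subst2 (F : MvPowerSeries (Fin 2) A) (g h : MvPowerSeries τ A) :
    MvPowerSeries τ A :=
  fun d => ∑ e ∈ range (deg d + 1) ×ˢ range (deg d + 1),
    MvPowerSeries.coeff (mon2 e.1 e.2) F * MvPowerSeries.coeff d (g ^ e.1 * h ^ e.2)

/-- Substitution `f(g)` of a power series `g` (assumed to have zero constant term)
into a one-variable power series `f`. -/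
def substPS (f : PowerSeries A) (g : MvPowerSeries τ A) : MvPowerSeries τ A :=
  fun d => ∑ n ∈ range (deg d + 1),
    PowerSeries.coeff n f * MvPowerSeries.coeff d (g ^ n)

/-- Composition `f(g)` of one-variable power series (`g` has zero constant term). -/
def comp (f g : PowerSeries A) : PowerSeries A := substPS f g

/-- `F` is a (commutative, one-dimensional) formal group law:
`F(x,0) = x`, `F(0,y) = y`, `F(x,y) = F(y,x)` and `F(F(x,y),z) = F(x,F(y,z))`. -/
def IsFGL (F : MvPowerSeries (Fin 2) A) : Prop :=
  subst2 F (MvPowerSeries.X 0) 0 = MvPowerSeries.X 0 ∧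
  subst2 F 0 (MvPowerSeries.X 1) = MvPowerSeries.X 1 ∧
  subst2 F (MvPowerSeries.X 1) (MvPowerSeries.X 0) = F ∧
  subst2 F (subst2 F (MvPowerSeries.X 0) (MvPowerSeries.X 1))
      (MvPowerSeries.X 2 : MvPowerSeries (Fin 3) A)
    = subst2 F (MvPowerSeries.X 0) (subst2 F (MvPowerSeries.X 1) (MvPowerSeries.X 2))

/-- `f` is a homomorphism of formal group laws `F → G`:
`f(0) = 0` and `f(F(x,y)) = G(f(x), f(y))`. -/
def IsHom (F G : MvPowerSeries (Fin 2) A) (f : PowerSeries A) : Prop :=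
  PowerSeries.constantCoeff f = 0 ∧
  substPS f F = subst2 G (substPS f (MvPowerSeries.X 0)) (substPS f (MvPowerSeries.X 1))

/-- `f` is an isomorphism of formal group laws `F → G`: a homomorphism whose
linear coefficient is a unit. -/
def IsIso (F G : MvPowerSeries (Fin 2) A) (f : PowerSeries A) : Prop :=
  IsHom F G f ∧ IsUnit (PowerSeries.coeff 1 f)

/-- `f` is a strict isomorphism of formal group laws `F → G`: a homomorphism whose
linear coefficient is `1`. -/
def IsStrictIso (F G : MvPowerSeries (Fin 2) A) (f : PowerSeries A) : Prop :=
  IsHom F G f ∧ PowerSeries.coeff 1 f = 1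

/-- The `n`-series `[n]_F` of a formal group law, defined by `[0]_F = 0` and
`[n+1]_F(x) = F(x, [n]_F(x))`. -/
def nSeries (F : MvPowerSeries (Fin 2) A) : ℕ → PowerSeries A
  | 0 => 0
  | n + 1 => subst2 F PowerSeries.X (nSeries F n)

/-- `F` has height `≥ n` (at the prime `p`): the coefficient of `x^i` in `[p]_F`
vanishes for all `i < p^n`. -/
def HeightGE (p : ℕ) (F : MvPowerSeries (Fin 2) A) (n : ℕ) : Prop :=
  ∀ i < p ^ n, PowerSeries.coeff i (nSeries F p) = 0

/-- `F` has strict height `n` (at the prime `p`): it has height `≥ n` and the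
coefficient of `x^{p^n}` in `[p]_F` is a unit. -/
def StrictHeight (p : ℕ) (F : MvPowerSeries (Fin 2) A) (n : ℕ) : Prop :=
  HeightGE p F n ∧ IsUnit (PowerSeries.coeff (p ^ n) (nSeries F p))

/-- Coefficients of the compositional inverse of a power series `f` with `f(0) = 0`
and invertible linear coefficient. -/
def invCoeff (f : PowerSeries A) : ℕ → A
  | 0 => 0
  | 1 => Ring.inverse (PowerSeries.coeff 1 f)
  | n + 2 =>
    - Ring.inverse ((PowerSeries.coeff 1 f) ^ (n + 2)) *
      ∑ k ∈ (range (n + 2)).attach,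
        invCoeff f k.1 * PowerSeries.coeff (n + 2) (f ^ (k.1 : ℕ))
  decreasing_by exact Finset.mem_range.mp k.2

/-- The compositional inverse of a power series `f` with `f(0) = 0` and invertible
linear coefficient. -/
def compInv (f : PowerSeries A) : PowerSeries A := PowerSeries.mk (invCoeff f)

end FGL

open FGL

/-- The result `F^{(p)}` of raising each coefficient of a two-variable power series
to the `p`-th power (the pushforward along the Frobenius of the base ring). -/
def frobMv {A : Type*} [CommRing A] (p : ℕ) (F : MvPowerSeries (Fin 2) A) :
    MvPowerSeries (Fin 2) A :=
  fun d => MvPowerSeries.coeff d F ^ p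

/-- The result `f^{(p)}` of raising each coefficient of a one-variable power series
to the `p`-th power. -/
def frobPS {A : Type*} [CommRing A] (p : ℕ) (f : PowerSeries A) : PowerSeries A :=
  PowerSeries.mk fun n => PowerSeries.coeff n f ^ p

/-! Differentiating `f(F(x, y)) = G(f(x), f(y))` in `y` at `y = 0` gives
`f'(x) · ∂F/∂y(x, 0) = ∂G/∂y(f(x), 0) · f'(0) = 0`. As `∂F/∂y(0, 0) = 1`, the factor
`∂F/∂y(x, 0)` is a unit, so `f' = 0`: every coefficient `n aₙ` vanishes, and in characteristic
`p` this leaves only the monomials `x^{pm}`, i.e. `f(x) = g(x^p)`.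
For such a `g`, Frobenius gives `F(x, y)^p = F^{(p)}(x^p, y^p)`, so the homomorphism identity
for `f` is the identity `g(F^{(p)}(x, y)) = G(g(x), g(y))` after substituting `x^p, y^p` for
`x, y`, and that substitution is injective. -/

theorem isUnit_natCast_of_not_dvd {A : Type*} [CommRing A] {p : ℕ} (hp : p.Prime)
    (hchar : (p : A) = 0) {n : ℕ} (hn : ¬ p ∣ n) : IsUnit (n : A) := by
  have h := (Nat.isCoprime_iff_coprime.mpr
    ((hp.coprime_iff_not_dvd.mpr hn).symm)).map (Int.castRingHom A)
  simp only [eq_intCast, Int.cast_natCast, hchar] at h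
  exact isCoprime_zero_right.mp h

theorem MvPowerSeries.expand_injective {σ A : Type*} [CommRing A] {p : ℕ} (hp : p ≠ 0) :
    Function.Injective (expand p hp : MvPowerSeries σ A → MvPowerSeries σ A) := by
  intro g g' h
  ext d
  rw [← coeff_expand_smul p hp g, h, coeff_expand_smul]

namespace PowerSeries

variable {A : Type*} [CommRing A] {p : ℕ}

theorem expand_injective (hp : p ≠ 0) :
    Function.Injective (expand p hp : PowerSeries A → PowerSeries A) := by
  intro g g' h
  ext m
  rw [← coeff_expand_mul p hp g, h, coeff_expand_mul]

theorem eq_expand_of_coeff_eq_zero (hp : p ≠ 0) {f : PowerSeries A}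
    (hf : ∀ n, ¬ p ∣ n → coeff n f = 0) :
    f = expand p hp (mk fun m => coeff (p * m) f) := by
  ext n
  rw [coeff_expand]
  split_ifs with h
  · rw [coeff_mk, Nat.mul_div_cancel' h]
  · exact hf n h

theorem subst_expand {τ : Type*} (hp : p ≠ 0) {a : MvPowerSeries τ A}
    (ha : MvPowerSeries.constantCoeff a = 0) (g : PowerSeries A) :
    subst a (expand p hp g) = subst (a ^ p) g := by
  have has := HasSubst.of_constantCoeff_zero ha
  rw [expand_apply, subst_comp_subst_apply (.X_pow hp) has, subst_pow has, subst_X has]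

theorem coeff_eq_zero_of_derivative_eq_zero (hp : p.Prime) (hchar : (p : A) = 0)
    {f : PowerSeries A} (hf : derivative A f = 0) {n : ℕ} (hn : ¬ p ∣ n) : coeff n f = 0 := by
  obtain _ | m := n
  · exact absurd (dvd_zero p) hn
  have h := congrArg (coeff m) hf
  rw [coeff_derivative, map_zero] at h
  exact (isUnit_natCast_of_not_dvd hp hchar hn).mul_left_eq_zero.mp (by exact_mod_cast h)

end PowerSeries

namespace FGL

open Finset

variable {A : Type*} [CommRing A] {τ : Type*}

theorem mon2_apply_zero (i j : ℕ) : mon2 i j 0 = i := by simp [mon2]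

theorem mon2_apply_one (i j : ℕ) : mon2 i j 1 = j := by simp [mon2]

theorem mon2_eq (e : Fin 2 →₀ ℕ) : mon2 (e 0) (e 1) = e := by
  ext i
  fin_cases i <;> simp [mon2_apply_zero, mon2_apply_one]

theorem deg_mon2 (i j : ℕ) : deg (mon2 i j) = i + j := by
  simp [deg, mon2, Finsupp.sum_add_index']

theorem coeff_pow_mul_pow_eq_zero {g h : MvPowerSeries τ A}
    (hg : MvPowerSeries.constantCoeff g = 0) (hh : MvPowerSeries.constantCoeff h = 0)
    {m n : ℕ} {d : τ →₀ ℕ} (hd : deg d < m + n) :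
    MvPowerSeries.coeff d (g ^ m * h ^ n) = 0 := by
  apply MvPowerSeries.coeff_of_lt_order
  calc (d.degree : ℕ∞) < m + n := by exact_mod_cast hd
    _ ≤ (g ^ m).order + (h ^ n).order :=
      add_le_add (MvPowerSeries.le_order_pow_of_constantCoeff_eq_zero m hg)
        (MvPowerSeries.le_order_pow_of_constantCoeff_eq_zero n hh)
    _ ≤ _ := MvPowerSeries.le_order_mul

theorem substPS_eq_subst (f : PowerSeries A) {g : MvPowerSeries τ A}
    (hg : MvPowerSeries.constantCoeff g = 0) : substPS f g = PowerSeries.subst g f := by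
  ext d
  rw [PowerSeries.coeff_subst (PowerSeries.HasSubst.of_constantCoeff_zero hg),
    finsum_eq_sum_of_support_subset (s := range (deg d + 1))]
  · rfl
  intro n hn
  rw [coe_range, Set.mem_Iio]
  by_contra hnd
  have := coeff_pow_mul_pow_eq_zero hg hg (m := n) (n := 0) (d := d) (by omega)
  rw [pow_zero, mul_one] at this
  exact hn (by simp [this])

theorem subst2_eq_subst (F : MvPowerSeries (Fin 2) A) {g h : MvPowerSeries τ A}
    (hg : MvPowerSeries.constantCoeff g = 0) (hh : MvPowerSeries.constantCoeff h = 0) :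
    subst2 F g h = MvPowerSeries.subst ![g, h] F := by
  ext d
  have hprod (e : Fin 2 →₀ ℕ) : (e.prod fun s n => ![g, h] s ^ n) = g ^ e 0 * h ^ e 1 := by
    rw [Finsupp.prod_fintype _ _ (by simp), Fin.prod_univ_two]
    rfl
  rw [MvPowerSeries.coeff_subst (MvPowerSeries.hasSubst_of_constantCoeff_zero
      (Fin.forall_fin_two.mpr ⟨hg, hh⟩)),
    finsum_eq_sum_of_support_subset
      (s := (range (deg d + 1) ×ˢ range (deg d + 1)).image fun e => mon2 e.1 e.2),
    sum_image]
  · simp only [hprod, mon2_apply_zero, mon2_apply_one, smul_eq_mul]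
    rfl
  · intro e _ e' _ hee'
    have h0 := congrArg (· 0) hee'
    have h1 := congrArg (· 1) hee'
    simp only [mon2_apply_zero, mon2_apply_one] at h0 h1
    exact Prod.ext h0 h1
  · intro e he
    rw [Function.mem_support, hprod] at he
    have hde : e 0 + e 1 ≤ deg d := by
      by_contra hlt
      exact he (by rw [coeff_pow_mul_pow_eq_zero hg hh (by omega), smul_zero])
    simp only [coe_image, coe_product, coe_range, Set.mem_image, Set.mem_prod, Set.mem_Iio,
      Prod.exists]
    exact ⟨e 0, e 1, ⟨by omega, by omega⟩, mon2_eq e⟩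

theorem coeff_subst_X_zero (H : MvPowerSeries (Fin 2) A) (i : τ) (a : ℕ) :
    MvPowerSeries.coeff (Finsupp.single i a)
      (MvPowerSeries.subst ![MvPowerSeries.X i, 0] H) = MvPowerSeries.coeff (mon2 a 0) H := by
  classical
  rw [MvPowerSeries.coeff_subst .X_zero, finsum_eq_single _ (mon2 a 0)]
  · simp [Finsupp.prod_fintype, mon2_apply_zero, mon2_apply_one, MvPowerSeries.coeff_X_pow]
  · intro e he
    rw [Finsupp.prod_fintype _ _ (by simp), Fin.prod_univ_two]
    by_cases he1 : e 1 = 0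
    · have he0 : e 0 ≠ a := fun h => he (by rw [← mon2_eq e, h, he1])
      simp [he1, MvPowerSeries.coeff_X_pow, (Finsupp.single_injective i).eq_iff, Ne.symm he0]
    · simp [zero_pow he1]

theorem coeff_subst_zero_X (H : MvPowerSeries (Fin 2) A) (i : τ) (b : ℕ) :
    MvPowerSeries.coeff (Finsupp.single i b)
      (MvPowerSeries.subst ![0, MvPowerSeries.X i] H) = MvPowerSeries.coeff (mon2 0 b) H := by
  classical
  rw [MvPowerSeries.coeff_subst .zero_X, finsum_eq_single _ (mon2 0 b)]
  · simp [Finsupp.prod_fintype, mon2_apply_zero, mon2_apply_one, MvPowerSeries.coeff_X_pow]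
  · intro e he
    rw [Finsupp.prod_fintype _ _ (by simp), Fin.prod_univ_two]
    by_cases he0 : e 0 = 0
    · have he1 : e 1 ≠ b := fun h => he (by rw [← mon2_eq e, h, he0])
      simp [he0, MvPowerSeries.coeff_X_pow, (Finsupp.single_injective i).eq_iff, Ne.symm he1]
    · simp [zero_pow he0]

/-- `H(x, 0)`. -/
def restrictY : MvPowerSeries (Fin 2) A →ₐ[A] PowerSeries A :=
  MvPowerSeries.substAlgHom (MvPowerSeries.HasSubst.X_zero (i := ()))

/-- `∂H/∂y (x, 0)`, the coefficient of `y¹` in `H`. -/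
def yLinear (H : MvPowerSeries (Fin 2) A) : PowerSeries A :=
  restrictY (MvPowerSeries.pderiv A 1 H)

theorem coeff_restrictY (H : MvPowerSeries (Fin 2) A) (a : ℕ) :
    PowerSeries.coeff a (restrictY H) = MvPowerSeries.coeff (mon2 a 0) H := by
  rw [restrictY, MvPowerSeries.coe_substAlgHom]
  exact coeff_subst_X_zero H () a

theorem coeff_yLinear (H : MvPowerSeries (Fin 2) A) (a : ℕ) :
    PowerSeries.coeff a (yLinear H) = MvPowerSeries.coeff (mon2 a 1) H := by
  rw [yLinear, coeff_restrictY, MvPowerSeries.coeff_pderiv, mon2_apply_one]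
  simp [mon2]

theorem yLinear_mul (H K : MvPowerSeries (Fin 2) A) :
    yLinear (H * K) = restrictY H * yLinear K + restrictY K * yLinear H := by
  simp only [yLinear, Derivation.leibniz, smul_eq_mul, map_add, map_mul]

theorem yLinear_pow (H : MvPowerSeries (Fin 2) A) (n : ℕ) :
    yLinear (H ^ n) = n • (restrictY H ^ (n - 1) * yLinear H) := by
  simp only [yLinear, Derivation.leibniz_pow, smul_eq_mul, map_nsmul, map_mul, map_pow]

theorem restrictY_eq_X {F : MvPowerSeries (Fin 2) A}
    (hF : subst2 F (MvPowerSeries.X (0 : ℕ)) 0 = MvPowerSeries.X 0) :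
    restrictY F = PowerSeries.X := by
  ext a
  rw [coeff_restrictY, ← coeff_subst_X_zero F 0 a, ← subst2_eq_subst F (by simp) (map_zero _), hF,
    MvPowerSeries.coeff_X, PowerSeries.coeff_X]
  exact if_congr (Finsupp.single_injective _).eq_iff rfl rfl

theorem constantCoeff_yLinear {F : MvPowerSeries (Fin 2) A}
    (hF : subst2 F 0 (MvPowerSeries.X (1 : ℕ)) = MvPowerSeries.X 1) :
    PowerSeries.constantCoeff (yLinear F) = 1 := by
  rw [← PowerSeries.coeff_zero_eq_constantCoeff_apply, coeff_yLinear, ← coeff_subst_zero_X F 1,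
    ← subst2_eq_subst F (map_zero _) (by simp), hF, MvPowerSeries.coeff_X, if_pos rfl]

theorem constantCoeff_eq_zero_of_restrictY_eq_X {F : MvPowerSeries (Fin 2) A}
    (hF : restrictY F = PowerSeries.X) : MvPowerSeries.constantCoeff F = 0 := by
  have := congrArg (PowerSeries.coeff 0) hF
  rwa [coeff_restrictY, PowerSeries.coeff_zero_X, show mon2 0 0 = 0 by simp [mon2],
    MvPowerSeries.coeff_zero_eq_constantCoeff_apply] at this

theorem yLinear_substPS {F : MvPowerSeries (Fin 2) A} (hF : restrictY F = PowerSeries.X)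
    (f : PowerSeries A) :
    yLinear (substPS f F) = PowerSeries.derivative A f * yLinear F := by
  ext a
  rw [PowerSeries.coeff_mul, Finset.Nat.sum_antidiagonal_eq_sum_range_succ_mk, coeff_yLinear]
  change ∑ k ∈ range (deg (mon2 a 1) + 1),
    PowerSeries.coeff k f * MvPowerSeries.coeff (mon2 a 1) (F ^ k) = _
  simp only [← coeff_yLinear, yLinear_pow, hF, deg_mon2, map_nsmul]
  rw [sum_range_succ']
  simp only [zero_smul, mul_zero, add_zero, PowerSeries.coeff_derivative, add_tsub_cancel_right,
    PowerSeries.coeff_X_pow_mul']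
  refine sum_congr rfl fun i hi => ?_
  rw [if_pos (Nat.lt_succ_iff.mp (mem_range.mp hi)), nsmul_eq_mul]
  push_cast
  ring

theorem yLinear_subst2_eq_zero (G : MvPowerSeries (Fin 2) A) {u v : MvPowerSeries (Fin 2) A}
    (hu : yLinear u = 0) (hv : yLinear v = 0) : yLinear (subst2 G u v) = 0 := by
  ext a
  rw [coeff_yLinear, map_zero]
  refine sum_eq_zero fun e _ => ?_
  rw [← coeff_yLinear, yLinear_mul, yLinear_pow, yLinear_pow, hu, hv]
  simp

theorem yLinear_substPS_X_zero (f : PowerSeries A) :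
    yLinear (substPS f (MvPowerSeries.X 0)) = 0 := by
  classical
  ext a
  rw [coeff_yLinear, substPS_eq_subst _ (MvPowerSeries.constantCoeff_X 0),
    PowerSeries.coeff_subst_single, if_neg, map_zero]
  intro h
  simpa [mon2_apply_one] using congrArg (· 1) h

theorem yLinear_substPS_X_one {f : PowerSeries A} (hf1 : PowerSeries.coeff 1 f = 0) :
    yLinear (substPS f (MvPowerSeries.X 1)) = 0 := by
  classical
  ext a
  rw [coeff_yLinear, substPS_eq_subst _ (MvPowerSeries.constantCoeff_X 1),
    PowerSeries.coeff_subst_single, mon2_apply_one, hf1, ite_self, map_zero]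

theorem derivative_eq_zero_of_isHom {F G : MvPowerSeries (Fin 2) A} {f : PowerSeries A}
    (hFx : restrictY F = PowerSeries.X) (hFy : PowerSeries.constantCoeff (yLinear F) = 1)
    (hf : IsHom F G f) (hf1 : PowerSeries.coeff 1 f = 0) :
    PowerSeries.derivative A f = 0 := by
  have h := congrArg yLinear hf.2
  rw [yLinear_substPS hFx, yLinear_subst2_eq_zero G (yLinear_substPS_X_zero f)
    (yLinear_substPS_X_one hf1)] at h
  exact (PowerSeries.isUnit_iff_constantCoeff.mpr (hFy ▸ isUnit_one)).mul_left_eq_zero.mp h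

theorem comp_X_pow {p : ℕ} (hp : p ≠ 0) (g : PowerSeries A) :
    comp g (PowerSeries.X ^ p) = PowerSeries.expand p hp g := by
  have hX : PowerSeries.constantCoeff (PowerSeries.X ^ p : PowerSeries A) = 0 := by simp [hp]
  rw [comp, substPS_eq_subst _ hX, PowerSeries.expand_apply]

theorem pow_eq_expand_frobMv {p : ℕ} (hp : p.Prime) (hchar : (p : A) = 0)
    (F : MvPowerSeries (Fin 2) A) :
    F ^ p = MvPowerSeries.expand p hp.ne_zero (frobMv p F) := by
  cases subsingleton_or_nontrivial A with
  | inl _ => ext; exact Subsingleton.elim _ _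
  | inr _ =>
    have : Fact p.Prime := ⟨hp⟩
    have : CharP A p := (CharP.charP_iff_prime_eq_zero hp).mpr hchar
    rw [← MvPowerSeries.map_frobenius_expand p hp.ne_zero, MvPowerSeries.map_expand]
    rfl

theorem subst2_expand {p : ℕ} (hp : p ≠ 0) (G : MvPowerSeries (Fin 2) A)
    {u v : MvPowerSeries (Fin 2) A}
    (hu : MvPowerSeries.constantCoeff u = 0) (hv : MvPowerSeries.constantCoeff v = 0) :
    subst2 G (MvPowerSeries.expand p hp u) (MvPowerSeries.expand p hp v) =
      MvPowerSeries.expand p hp (subst2 G u v) := by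
  rw [subst2_eq_subst G hu hv, subst2_eq_subst G (by simpa) (by simpa),
    MvPowerSeries.expand_subst p hp
      (MvPowerSeries.hasSubst_of_constantCoeff_zero (Fin.forall_fin_two.mpr ⟨hu, hv⟩))]
  congr 1
  funext i
  fin_cases i <;> rfl

theorem isHom_frobMv_of_isHom_expand {p : ℕ} (hp : p.Prime) (hchar : (p : A) = 0)
    {F G : MvPowerSeries (Fin 2) A} (hF : MvPowerSeries.constantCoeff F = 0)
    {g : PowerSeries A} (hg : IsHom F G (PowerSeries.expand p hp.ne_zero g)) :
    IsHom (frobMv p F) G g := by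
  obtain ⟨hg0, hgFG⟩ := hg
  rw [PowerSeries.constantCoeff_expand] at hg0
  have hX (i : Fin 2) : substPS (PowerSeries.expand p hp.ne_zero g) (MvPowerSeries.X i) =
      MvPowerSeries.expand p hp.ne_zero (substPS g (MvPowerSeries.X i)) := by
    rw [substPS_eq_subst _ (MvPowerSeries.constantCoeff_X i),
      substPS_eq_subst _ (MvPowerSeries.constantCoeff_X i), PowerSeries.subst_expand _ (by simp),
      PowerSeries.expand_subst _ _ (.X i), MvPowerSeries.expand_X]
  have hgX (i : Fin 2) : MvPowerSeries.constantCoeff (substPS g (MvPowerSeries.X i)) = 0 := by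
    rw [substPS_eq_subst _ (MvPowerSeries.constantCoeff_X i)]
    exact PowerSeries.constantCoeff_subst_eq_zero (MvPowerSeries.constantCoeff_X i) _ hg0
  have hFp : MvPowerSeries.constantCoeff (frobMv p F) = 0 := by
    change MvPowerSeries.coeff 0 F ^ p = 0
    rw [MvPowerSeries.coeff_zero_eq_constantCoeff_apply, hF, zero_pow hp.ne_zero]
  refine ⟨hg0, MvPowerSeries.expand_injective hp.ne_zero ?_⟩
  calc MvPowerSeries.expand p hp.ne_zero (substPS g (frobMv p F))
      = PowerSeries.subst (F ^ p) g := by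
        rw [substPS_eq_subst _ hFp, PowerSeries.expand_subst _ _ (.of_constantCoeff_zero hFp),
          pow_eq_expand_frobMv hp hchar]
    _ = substPS (PowerSeries.expand p hp.ne_zero g) F := by
        rw [substPS_eq_subst _ hF, PowerSeries.subst_expand _ hF]
    _ = _ := by rw [hgFG, hX, hX, subst2_expand _ _ (hgX 0) (hgX 1)]

end FGL

theorem hom_with_zero_derivative_factors_through_frobenius_general
    (p : ℕ) (hp : p.Prime) (A : Type*) [CommRing A] (hchar : (p : A) = 0)
    (F G : MvPowerSeries (Fin 2) A) (hF : IsFGL F)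
    (f : PowerSeries A) (hf : IsHom F G f)
    (hf1 : PowerSeries.coeff 1 f = 0) :
    (∃! g : PowerSeries A, f = comp g (PowerSeries.X ^ p)) ∧
    ∀ g : PowerSeries A, f = comp g (PowerSeries.X ^ p) →
      IsHom (frobMv p F) G g := by
  obtain ⟨hFx, hFy, -, -⟩ := hF
  have hFx' := restrictY_eq_X hFx
  have hvanish : ∀ n, ¬ p ∣ n → PowerSeries.coeff n f = 0 := fun n hn =>
    PowerSeries.coeff_eq_zero_of_derivative_eq_zero hp hchar
      (derivative_eq_zero_of_isHom hFx' (constantCoeff_yLinear hFy) hf hf1) hn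
  simp only [comp_X_pow hp.ne_zero]
  refine ⟨⟨_, PowerSeries.eq_expand_of_coeff_eq_zero hp.ne_zero hvanish, fun g hg => ?_⟩, ?_⟩
  · exact PowerSeries.expand_injective hp.ne_zero
      (hg.symm.trans (PowerSeries.eq_expand_of_coeff_eq_zero hp.ne_zero hvanish))
  · rintro g rfl
    exact isHom_frobMv_of_isHom_expand hp hchar (constantCoeff_eq_zero_of_restrictY_eq_X hFx') hf

/-- A homomorphism of formal group laws in characteristic `p` whose linear
coefficient vanishes factors uniquely through the relative Frobenius: there is a
unique `g` with `f(x) = g(x^p)`, and this `g` is a homomorphism `F^{(p)} → G`. -/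
theorem hom_with_zero_derivative_factors_through_frobenius
    (p : ℕ) (hp : p.Prime) (A : Type*) [CommRing A] (hchar : (p : A) = 0)
    (F G : MvPowerSeries (Fin 2) A) (hF : IsFGL F) (hG : IsFGL G)
    (f : PowerSeries A) (hf : IsHom F G f)
    (hf1 : PowerSeries.coeff 1 f = 0) :
    (∃! g : PowerSeries A, f = comp g (PowerSeries.X ^ p)) ∧
    ∀ g : PowerSeries A, f = comp g (PowerSeries.X ^ p) →
      IsHom (frobMv p F) G g :=
  hom_with_zero_derivative_factors_through_frobenius_general p hp A hchar F G hF f hf hf1
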